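/- Let A, B ∈ ℝ^{q×q} be symmetric commuting matrices with A positive semidefinite and B positive definite, and C ∈ ℝ^{r×q}. Then ‖C(A^{1/2} − B^{1/2})‖_F ≤ (λ_min^B)^{−1/2} ‖C(A − B)‖_F, where λ_min^B is the smallest eigenvalue of B and ‖·‖_F is the Frobenius norm. -/

import Mathlib

open Matrix

/-- The positive semidefinite square root of a positive semidefinite matrix (the definition
`Matrix.PosSemidef.sqrt` of the older Mathlib, which has since been removed). -/
noncomputable def Matrix.PosSemidef.sqrt {n : Type*} [Fintype n] [DecidableEq n] {𝕜 : Type*}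
    [RCLike 𝕜] [PartialOrder 𝕜] {A : Matrix n n 𝕜} (hA : A.PosSemidef) : Matrix n n 𝕜 :=
  hA.1.eigenvectorUnitary.1 * diagonal ((↑) ∘ Real.sqrt ∘ hA.1.eigenvalues) *
  (star hA.1.eigenvectorUnitary : Matrix n n 𝕜)

theorem Matrix.PosSemidef.posSemidef_sqrt {n : Type*} [Fintype n] [DecidableEq n]
    {A : Matrix n n ℝ} (hA : A.PosSemidef) : hA.sqrt.PosSemidef := by
  unfold Matrix.PosSemidef.sqrt
  exact (Matrix.posSemidef_diagonal_iff.mpr (fun i => by simp [Real.sqrt_nonneg])).mul_mul_conjTranspose_same _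

theorem Matrix.PosSemidef.sqrt_mul_self {n : Type*} [Fintype n] [DecidableEq n]
    {A : Matrix n n ℝ} (hA : A.PosSemidef) : hA.sqrt * hA.sqrt = A := by
  set U : Matrix n n ℝ := hA.1.eigenvectorUnitary.1 with hU
  have hVU : star U * U = 1 := Matrix.mem_unitaryGroup_iff'.mp hA.1.eigenvectorUnitary.2
  have hspec : A = U * diagonal hA.1.eigenvalues * star U := by
    simpa [RCLike.ofReal_real_eq_id] using hA.1.spectral_theorem
  set E := diagonal ((RCLike.ofReal : ℝ → ℝ) ∘ Real.sqrt ∘ hA.1.eigenvalues) with hE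
  have hd : E * E = diagonal hA.1.eigenvalues := by
    rw [hE, diagonal_mul_diagonal]; congr 1; funext i
    simp [Real.mul_self_sqrt (hA.eigenvalues_nonneg i)]
  unfold Matrix.PosSemidef.sqrt
  show U * E * star U * (U * E * star U) = A
  conv_rhs => rw [hspec, ← hd]
  calc U * E * star U * (U * E * star U) = U * E * (star U * U) * E * star U := by
        simp only [Matrix.mul_assoc]
    _ = U * (E * E) * star U := by rw [hVU]; simp only [Matrix.mul_assoc, Matrix.one_mul]

namespace FrobAux

open Polynomial

variable {q : ℕ}

lemma pow_conj {U V D : Matrix (Fin q) (Fin q) ℝ} (hUV : U * V = 1) (n : ℕ) :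
    (U * D * V) ^ n = U * D ^ n * V := by
  have hVU : V * U = 1 := mul_eq_one_comm.mp hUV
  induction n with
  | zero => simpa using hUV.symm
  | succ n ih =>
    rw [pow_succ, ih, pow_succ]
    calc U * D ^ n * V * (U * D * V) = U * D ^ n * (V * U) * D * V := by
          simp only [Matrix.mul_assoc]
      _ = U * (D ^ n * D) * V := by rw [hVU]; simp only [Matrix.mul_assoc, Matrix.mul_one]
      _ = _ := by simp only [Matrix.mul_assoc]

lemma aeval_conj_diag {U V : Matrix (Fin q) (Fin q) ℝ} (d : Fin q → ℝ)
    (hUV : U * V = 1) (p : ℝ[X]) :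
    Polynomial.aeval (U * Matrix.diagonal d * V) p
      = U * Matrix.diagonal (fun i => p.eval (d i)) * V := by
  induction p using Polynomial.induction_on' with
  | add p1 p2 h1 h2 =>
    have : (Matrix.diagonal fun i => (p1 + p2).eval (d i))
        = Matrix.diagonal (fun i => p1.eval (d i)) + Matrix.diagonal (fun i => p2.eval (d i)) := by
      rw [Matrix.diagonal_add]; funext i; simp
    rw [map_add, h1, h2, this, Matrix.mul_add, Matrix.add_mul]

  | monomial n a =>
    rw [aeval_monomial, pow_conj hUV, ← Algebra.smul_def]
    have h1 : (fun i => (monomial n a).eval (d i)) = a • (fun i => d i ^ n) := by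
      funext i; simp [eval_monomial]
    have h2 : (fun i => d i ^ n) = d ^ n := by funext i; simp
    rw [h1, h2, Matrix.diagonal_smul, ← Matrix.diagonal_pow, Matrix.mul_smul, Matrix.smul_mul]

lemma exists_poly_sqrt (X : Matrix (Fin q) (Fin q) ℝ) (hX : X.PosSemidef) :
    ∃ p : ℝ[X], Polynomial.aeval X p = hX.sqrt := by
  classical
  set ev := hX.1.eigenvalues with hev
  set U : Matrix (Fin q) (Fin q) ℝ := hX.1.eigenvectorUnitary.1 with hU
  have hUV : U * star U = 1 := Matrix.mem_unitaryGroup_iff.mp hX.1.eigenvectorUnitary.2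
  set s : Finset ℝ := Finset.image ev Finset.univ with hs
  refine ⟨Lagrange.interpolate s id Real.sqrt, ?_⟩
  have heval : ∀ i, (Lagrange.interpolate s id Real.sqrt).eval (ev i) = Real.sqrt (ev i) := by
    intro i
    exact Lagrange.eval_interpolate_at_node _ (Set.injOn_id _)
      (Finset.mem_image.mpr ⟨i, Finset.mem_univ i, rfl⟩)
  have hspec : X = U * Matrix.diagonal ev * star U := by
    have := hX.1.spectral_theorem
    simpa [RCLike.ofReal_real_eq_id] using this
  rw [Matrix.PosSemidef.sqrt]
  conv_lhs => rw [hspec]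
  rw [aeval_conj_diag _ hUV]
  have : (fun i => ((Lagrange.interpolate s id) Real.sqrt).eval (ev i))
      = ((↑) ∘ Real.sqrt ∘ hX.1.eigenvalues : Fin q → ℝ) := by
    funext i
    rw [heval i]
    simp [RCLike.ofReal_real_eq_id, hev]
  rw [this]
  have h2 : (RCLike.ofReal ∘ Real.sqrt ∘ hX.1.eigenvalues : Fin q → ℝ)
      = ((fun x => x) ∘ Real.sqrt ∘ hX.1.eigenvalues) := by
    rw [RCLike.ofReal_real_eq_id]; rfl
  rw [h2]

lemma commute_aeval {M N : Matrix (Fin q) (Fin q) ℝ} (h : M * N = N * M) (p : ℝ[X]) :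
    M * Polynomial.aeval N p = Polynomial.aeval N p * M := by
  have hc : Commute M N := h
  induction p using Polynomial.induction_on' with
  | add p1 p2 h1 h2 => rw [map_add, Matrix.mul_add, Matrix.add_mul, h1, h2]
  | monomial n a =>
    rw [aeval_monomial]
    have h2 : Commute M ((algebraMap ℝ (Matrix (Fin q) (Fin q) ℝ)) a) :=
      (Algebra.commutes a M).symm
    exact h2.mul_right (hc.pow_right n)

lemma commute_sqrt {X M : Matrix (Fin q) (Fin q) ℝ} (hX : X.PosSemidef)
    (h : M * X = X * M) : M * hX.sqrt = hX.sqrt * M := by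
  obtain ⟨p, hp⟩ := exists_poly_sqrt X hX
  rw [← hp]; exact commute_aeval h p


lemma trace_psd_nonneg {r : ℕ} {P : Matrix (Fin r) (Fin r) ℝ} (hP : P.PosSemidef) :
    0 ≤ Matrix.trace P := by
  rw [Matrix.trace]
  apply Finset.sum_nonneg
  intro i _
  have := hP.diag_nonneg (i := i)
  simpa [dotProduct, Matrix.mulVec, Pi.single_apply, Finset.sum_ite_eq,
    Matrix.diag] using this

lemma sum_sq_eq_trace {r q : ℕ} (M : Matrix (Fin r) (Fin q) ℝ) :
    ∑ i, ∑ j, (M i j)^2 = Matrix.trace (M * Mᴴ) := by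
  simp [Matrix.trace, Matrix.diag, Matrix.mul_apply, Matrix.conjTranspose_apply, sq]

end FrobAux

/-- The Frobenius norm of a real matrix. -/
noncomputable def frobNorm {r q : ℕ} (C : Matrix (Fin r) (Fin q) ℝ) : ℝ :=
  Real.sqrt (∑ i, ∑ j, (C i j) ^ 2)

/-- **Lemma 4.3 (iii)**: for symmetric commuting `A, B` with `A` positive semidefinite and `B`
positive definite, and any `C`, `‖C(A^{1/2} − B^{1/2})‖_F ≤ (λ_min^B)^{−1/2} ‖C(A − B)‖_F`. -/
theorem frobNorm_mul_sqrt_sub_sqrt_le {q r : ℕ} (hq : 0 < q)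
    (A B : Matrix (Fin q) (Fin q) ℝ)
    (hA : A.PosSemidef) (hB : B.PosDef) (hAB : A * B = B * A)
    (C : Matrix (Fin r) (Fin q) ℝ)
    (lam : ℝ) (hlam : lam = ⨅ i, hB.1.eigenvalues i) :
    frobNorm (C * (hA.sqrt - hB.posSemidef.sqrt))
      ≤ (Real.sqrt lam)⁻¹ * frobNorm (C * (A - B)) := by
  have : Nonempty (Fin q) := ⟨⟨0, hq⟩⟩
  set SA := hA.sqrt with hSA
  set SB := hB.posSemidef.sqrt with hSB
  have hSAps : SA.PosSemidef := hA.posSemidef_sqrt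
  have hSBps : SB.PosSemidef := hB.posSemidef.posSemidef_sqrt
  -- commutation chain
  have c1 : B * SA = SA * B := FrobAux.commute_sqrt hA hAB.symm
  have c2 : SA * SB = SB * SA := FrobAux.commute_sqrt hB.posSemidef c1.symm
  -- SA * SB is psd
  set T := hSAps.sqrt with hT'
  have hT : T.PosSemidef := hSAps.posSemidef_sqrt
  have cT : SB * T = T * SB := FrobAux.commute_sqrt hSAps c2.symm
  have hprod : (SA * SB).PosSemidef := by
    have hTT : T * T = SA := hSAps.sqrt_mul_self
    have hrw : SA * SB = T * SB * Tᴴ := by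
      rw [hT.1]
      calc SA * SB = T * T * SB := by rw [hTT]
        _ = T * (SB * T) := by rw [Matrix.mul_assoc, cT]
        _ = T * SB * T := by rw [Matrix.mul_assoc]
    rw [hrw]
    exact hSBps.mul_mul_conjTranspose_same T
  have hprod' : (SB * SA).PosSemidef := c2 ▸ hprod
  -- B - lam • 1 is psd
  have hlampos : 0 < lam := by
    obtain ⟨i, hi⟩ := Finite.exists_min hB.1.eigenvalues
    have hle : lam = hB.1.eigenvalues i := by
      rw [hlam]
      exact le_antisymm (ciInf_le (Set.Finite.bddBelow (Set.finite_range _)) i) (le_ciInf hi)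
    rw [hle]
    exact hB.eigenvalues_pos i
  have hBlam : (B - lam • (1 : Matrix (Fin q) (Fin q) ℝ)).PosSemidef := by
    set ev := hB.1.eigenvalues with hev
    set U : Matrix (Fin q) (Fin q) ℝ := hB.1.eigenvectorUnitary.1 with hU
    have hUV : U * star U = 1 := Matrix.mem_unitaryGroup_iff.mp hB.1.eigenvectorUnitary.2
    have hspec : B = U * Matrix.diagonal ev * star U := by
      simpa [RCLike.ofReal_real_eq_id] using hB.1.spectral_theorem
    have hlamle : ∀ i, lam ≤ ev i := fun i =>
      hlam ▸ ciInf_le (Set.Finite.bddBelow (Set.finite_range _)) i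
    have h1 : lam • (1 : Matrix (Fin q) (Fin q) ℝ)
        = U * Matrix.diagonal (fun _ => lam) * star U := by
      have hd : Matrix.diagonal (fun _ : Fin q => lam)
          = lam • (1 : Matrix (Fin q) (Fin q) ℝ) := by
        ext i j
        by_cases h : i = j <;> simp [Matrix.diagonal, Matrix.one_apply, h]
      rw [hd, Matrix.mul_smul, Matrix.mul_one, Matrix.smul_mul, hUV]
    have hsub : B - lam • (1 : Matrix (Fin q) (Fin q) ℝ)
        = U * Matrix.diagonal (fun i => ev i - lam) * star U := by
      rw [hspec, h1]
      have : Matrix.diagonal (fun i => ev i - lam)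
          = Matrix.diagonal ev - Matrix.diagonal (fun _ : Fin q => lam) := by
        rw [Matrix.diagonal_sub]
      rw [this, Matrix.mul_sub, Matrix.sub_mul]
    rw [hsub, Matrix.star_eq_conjTranspose]
    exact (Matrix.posSemidef_diagonal_iff.mpr
      (fun i => sub_nonneg.mpr (hlamle i))).mul_mul_conjTranspose_same U
  -- D and its square
  set D := SA + SB with hD
  have hDD : D * D - lam • (1 : Matrix (Fin q) (Fin q) ℝ)
      = (A + (SA * SB + SB * SA)) + (B - lam • (1 : Matrix (Fin q) (Fin q) ℝ)) := by
    have h2 : D * D = SA * SA + (SA * SB + SB * SA) + SB * SB := by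
      rw [hD]; noncomm_ring
    have h3 : SA * SA = A := by rw [hSA]; exact hA.sqrt_mul_self
    have h4 : SB * SB = B := by rw [hSB]; exact hB.posSemidef.sqrt_mul_self
    rw [h2, h3, h4]; abel
  have hsum : (D * D - lam • (1 : Matrix (Fin q) (Fin q) ℝ)).PosSemidef := by
    rw [hDD]
    exact (hA.add (hprod.add hprod')).add hBlam
  -- the matrix M
  set M := C * (SA - SB) with hM
  have hMD : M * D = C * (A - B) := by
    rw [hM, hD, Matrix.mul_assoc]
    congr 1
    have h5 : (SA - SB) * (SA + SB)
        = SA * SA - SB * SB + (SA * SB - SB * SA) := by noncomm_ring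
    have h3 : SA * SA = A := by rw [hSA]; exact hA.sqrt_mul_self
    have h4 : SB * SB = B := by rw [hSB]; exact hB.posSemidef.sqrt_mul_self
    rw [h5, c2, sub_self, add_zero, h3, h4]
  -- key trace inequality
  have key : lam * (∑ i, ∑ j, (M i j)^2) ≤ ∑ i, ∑ j, ((C * (A - B)) i j)^2 := by
    rw [FrobAux.sum_sq_eq_trace, FrobAux.sum_sq_eq_trace, ← hMD]
    have h0 : (0:ℝ) ≤ Matrix.trace (M * (D * D - lam • 1) * Mᴴ) :=
      FrobAux.trace_psd_nonneg (hsum.mul_mul_conjTranspose_same M)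
    have hDh : Dᴴ = D := hSAps.1.add hSBps.1
    have hexp : M * (D * D - lam • 1) * Mᴴ
        = (M * D) * (M * D)ᴴ - lam • (M * Mᴴ) := by
      have h7 : (M * D)ᴴ = D * Mᴴ := by rw [Matrix.conjTranspose_mul, hDh]
      rw [h7, Matrix.mul_sub, Matrix.sub_mul]
      congr 1
      · simp only [hM, Matrix.mul_assoc]
      · rw [Matrix.mul_smul, Matrix.mul_one, Matrix.smul_mul]
    rw [hexp, Matrix.trace_sub, Matrix.trace_smul, smul_eq_mul] at h0
    linarith
  -- wrap up
  have t1nn : 0 ≤ ∑ i, ∑ j, (M i j)^2 :=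
    Finset.sum_nonneg fun i _ => Finset.sum_nonneg fun j _ => sq_nonneg _
  have hstep : ∑ i, ∑ j, (M i j)^2 ≤ lam⁻¹ * ∑ i, ∑ j, ((C * (A - B)) i j)^2 := by
    have h6 : ∑ i, ∑ j, (M i j)^2 = lam⁻¹ * (lam * ∑ i, ∑ j, (M i j)^2) := by
      field_simp
    rw [h6]
    exact mul_le_mul_of_nonneg_left key (inv_nonneg.mpr hlampos.le)
  calc frobNorm M = Real.sqrt (∑ i, ∑ j, (M i j)^2) := rfl
    _ ≤ Real.sqrt (lam⁻¹ * ∑ i, ∑ j, ((C * (A - B)) i j)^2) := Real.sqrt_le_sqrt hstep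
    _ = (Real.sqrt lam)⁻¹ * Real.sqrt (∑ i, ∑ j, ((C * (A - B)) i j)^2) := by
        rw [Real.sqrt_mul (inv_nonneg.mpr hlampos.le), Real.sqrt_inv]
    _ = (Real.sqrt lam)⁻¹ * frobNorm (C * (A - B)) := rfl
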